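/- For every positive integer n, sum_{r=0}^{n} (-1)^{n+r} C(n+r, 2r) B_{2r}(x)/(n+r) = 2 B*_{2n}(x-2) as polynomials in x. -/

import Mathlib

/-!
Let `L : X ^ k ↦ Bₖ` be the umbral evaluation at the Bernoulli numbers, so that
`Bₖ(z) = L((X + z) ^ k)`, and let `Cₘ` be the Vieta–Lucas polynomials,
`Cₘ(y + y⁻¹) = yᵐ + y⁻ᵐ`. For `m ≥ 1` the coefficients of `Cₘ(X + 2)` are
`C(m + r, 2r) + C(m + r - 1, 2r) = 2m/(m + r) · C(m + r, 2r)`, hence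
`B*ₘ(z) = L(Cₘ(X + z + 2)) / 2m`. On the other side `C₂ₙ(X) = Cₙ(X² - 2) = (-1)ⁿ Cₙ(2 - X²)`,
and expanding `Cₙ(2 - X²)` in powers of `-X²` shows that the alternating sum equals
`L(C₂ₙ(X + x)) / 2n`. At `z = x - 2` both sides are the same multiple of `L(C₂ₙ(X + x))`.
-/

open Finset Polynomial

/-- The Zagier polynomials, evaluated at a real number. -/
noncomputable def zagierBstarPoly (n : ℕ) (x : ℝ) : ℝ :=
  ∑ r ∈ Finset.range (n + 1),
    ((n + r).choose (2 * r) : ℝ) * (Polynomial.aeval x (Polynomial.bernoulli r)) / (n + r)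

theorem Nat.choose_add_two_add_choose (N k : ℕ) :
    (N + 2).choose (k + 2) + N.choose (k + 2) = N.choose k + 2 * (N + 1).choose (k + 2) := by
  have h₁ : (N + 2).choose (k + 2) = (N + 1).choose (k + 1) + (N + 1).choose (k + 2) :=
    Nat.choose_succ_succ' _ _
  have h₂ : (N + 1).choose (k + 1) = N.choose k + N.choose (k + 1) := Nat.choose_succ_succ' _ _
  have h₃ : (N + 1).choose (k + 2) = N.choose (k + 1) + N.choose (k + 2) :=
    Nat.choose_succ_succ' _ _
  omega

theorem Nat.add_mul_choose_add_choose_eq (m r : ℕ) :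
    (m + 1 + r) * ((m + 1 + r).choose (2 * r) + (m + r).choose (2 * r)) =
      2 * (m + 1) * (m + 1 + r).choose (2 * r) := by
  rcases le_or_gt r (m + 1) with hr | hr
  · have h := Nat.choose_mul_succ_eq (m + r) (2 * r)
    rw [show m + r + 1 - 2 * r = m + 1 - r by omega, show m + r + 1 = m + 1 + r by ring] at h
    zify [hr] at h ⊢
    linear_combination h
  · simp [Nat.choose_eq_zero_of_lt (by omega : m + 1 + r < 2 * r),
      Nat.choose_eq_zero_of_lt (by omega : m + r < 2 * r)]

section DiagBinomial

variable (R : Type*) [CommRing R]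

noncomputable def diagBinomial (m : ℕ) : R[X] :=
  ∑ r ∈ range (m + 1), monomial r ((m + r).choose (2 * r) : R)

variable {R}

theorem coeff_diagBinomial (m r : ℕ) : (diagBinomial R m).coeff r = (m + r).choose (2 * r) := by
  simp only [diagBinomial, finsetSum_coeff, coeff_monomial, Finset.sum_ite_eq', mem_range]
  split_ifs with h
  · rfl
  · rw [Nat.choose_eq_zero_of_lt (by omega), Nat.cast_zero]

theorem diagBinomial_zero : diagBinomial R 0 = 1 := by
  simp [diagBinomial]

theorem diagBinomial_one : diagBinomial R 1 = X + 1 := by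
  simp [diagBinomial, sum_range_succ, add_comm, monomial_one_one_eq_X]

theorem diagBinomial_add_two (m : ℕ) :
    diagBinomial R (m + 2) = (X + 2) * diagBinomial R (m + 1) - diagBinomial R m := by
  ext (_ | r)
  · norm_num [coeff_diagBinomial]
  · have key : (m + 2 + (r + 1)).choose (2 * (r + 1)) + (m + (r + 1)).choose (2 * (r + 1)) =
        (m + 1 + r).choose (2 * r) + 2 * (m + 1 + (r + 1)).choose (2 * (r + 1)) := by
      convert Nat.choose_add_two_add_choose (m + r + 1) (2 * r) using 2 <;> ring_nf
    rw [coeff_sub, add_mul, coeff_add, coeff_X_mul, ← C_ofNat, coeff_C_mul]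
    simp only [coeff_diagBinomial]
    rw [eq_sub_iff_add_eq]
    simpa using congrArg (Nat.cast : ℕ → R) key

end DiagBinomial

namespace Polynomial.Chebyshev

section CommRing

variable {R : Type*} [CommRing R]

theorem C_comp_neg_X (n : ℕ) : (C R n).comp (-X) = (-1 : R) ^ n • C R n := by
  induction n using Nat.twoStepInduction with
  | zero => simp
  | one => simp
  | more n ih₀ ih₁ =>
    push_cast at ih₁ ⊢
    rw [C_add_two, sub_comp, mul_comp, X_comp, ih₁, ih₀]
    simp only [smul_eq_C_mul, map_pow, map_neg, map_one]
    ring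

theorem C_two_mul_eq_smul_comp (n : ℕ) :
    C R (2 * n : ℕ) = (-1 : R) ^ n • ((C R n).comp (X + 2)).comp (-X ^ 2) := by
  have hinner : (X + 2 : R[X]).comp (-X ^ 2) = (-X).comp (C R 2) := by
    simp only [C_two, add_comp, X_comp, ofNat_comp, Nat.cast_ofNat, neg_comp]
    ring
  rw [comp_assoc, hinner, ← comp_assoc, C_comp_neg_X, Nat.cast_mul, Nat.cast_ofNat, mul_comm,
    C_mul, smul_comp, smul_smul, ← mul_pow, neg_one_mul, neg_neg, one_pow, one_smul]

theorem C_comp_X_add_two (m : ℕ) :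
    (C R (m + 1)).comp (X + 2) = diagBinomial R (m + 1) + diagBinomial R m := by
  induction m using Nat.twoStepInduction with
  | zero =>
    simp only [Nat.cast_zero, zero_add, C_one, X_comp, diagBinomial_one, diagBinomial_zero]
    ring
  | one =>
    rw [diagBinomial_add_two, diagBinomial_one, diagBinomial_zero]
    norm_num [C_two]
    ring
  | more m ih₀ ih₁ =>
    push_cast at ih₁ ⊢
    rw [show (m : ℤ) + 2 + 1 = m + 1 + 2 by ring, C_add_two, sub_comp, mul_comp, X_comp, ih₁, ih₀,
      diagBinomial_add_two (m + 1), diagBinomial_add_two m]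
    ring

theorem coeff_C_comp_X_add_two (m r : ℕ) :
    ((C R (m + 1)).comp (X + 2)).coeff r =
      ((m + 1 + r).choose (2 * r) + (m + r).choose (2 * r) : ℕ) := by
  rw [C_comp_X_add_two, coeff_add, coeff_diagBinomial, coeff_diagBinomial, Nat.cast_add]

theorem natDegree_C_comp_X_add_two_le (m : ℕ) :
    ((C R (m + 1)).comp (X + 2)).natDegree ≤ m + 1 := by
  rw [natDegree_le_iff_coeff_eq_zero]
  intro r hr
  rw [coeff_C_comp_X_add_two, Nat.choose_eq_zero_of_lt (by omega),
    Nat.choose_eq_zero_of_lt (by omega), Nat.cast_zero]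

end CommRing

theorem coeff_C_comp_X_add_two_eq_div {K : Type*} [Field K] [CharZero K] (m r : ℕ) :
    ((C K (m + 1)).comp (X + 2)).coeff r =
      2 * (m + 1) * (m + 1 + r).choose (2 * r) / (m + 1 + r) := by
  have hne : (m + 1 + r : K) ≠ 0 := by norm_cast; omega
  rw [coeff_C_comp_X_add_two, eq_div_iff hne, mul_comm]
  exact_mod_cast Nat.add_mul_choose_add_choose_eq m r

end Polynomial.Chebyshev

section BernoulliUmbral

variable (A : Type*) [CommRing A] [Algebra ℚ A]

noncomputable def bernoulliUmbral : A[X] →ₗ[A] A :=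
  lsum fun m => LinearMap.mulRight A (algebraMap ℚ A (_root_.bernoulli m))

variable {A}

theorem bernoulliUmbral_monomial (m : ℕ) (a : A) :
    bernoulliUmbral A (monomial m a) = a * algebraMap ℚ A (_root_.bernoulli m) := by
  simp [bernoulliUmbral]

theorem bernoulliUmbral_C_mul (a : A) (p : A[X]) :
    bernoulliUmbral A (C a * p) = a * bernoulliUmbral A p := by
  rw [C_mul', map_smul, smul_eq_mul]

theorem bernoulliUmbral_comp (p q : A[X]) {N : ℕ} (hp : p.natDegree < N) :
    bernoulliUmbral A (p.comp q) = ∑ k ∈ range N, p.coeff k * bernoulliUmbral A (q ^ k) := by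
  conv_lhs => rw [p.as_sum_range' N hp]
  simp only [Polynomial.sum_comp, monomial_comp, map_sum, bernoulliUmbral_C_mul]

theorem bernoulliUmbral_X_add_C_pow (z : A) (k : ℕ) :
    bernoulliUmbral A ((X + C z) ^ k) = aeval z (Polynomial.bernoulli k) := by
  rw [add_comm, add_pow, Polynomial.bernoulli_def, map_sum, map_sum]
  refine sum_congr rfl fun m _ => ?_
  rw [← C_pow, ← C_eq_natCast, mul_comm, ← mul_assoc, ← C_mul, C_mul_X_pow_eq_monomial,
    bernoulliUmbral_monomial, aeval_monomial]
  simp only [map_mul, map_natCast]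
  ring

end BernoulliUmbral

theorem zagierBstarPoly_eq_bernoulliUmbral {m : ℕ} (hm : m ≠ 0) (z : ℝ) :
    zagierBstarPoly m z =
      (2 * m : ℝ)⁻¹ * bernoulliUmbral ℝ ((Chebyshev.C ℝ m).comp (X + C (z + 2))) := by
  obtain ⟨m, rfl⟩ : ∃ k, m = k + 1 := ⟨m - 1, by omega⟩
  have hshift : (Chebyshev.C ℝ (m + 1 : ℕ)).comp (X + C (z + 2)) =
      ((Chebyshev.C ℝ (m + 1)).comp (X + 2)).comp (X + C z) := by
    rw [comp_assoc, Nat.cast_succ]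
    congr 1
    simp only [add_comp, X_comp, C_add, C_ofNat, ofNat_comp, Nat.cast_ofNat]
    ring
  rw [hshift,
    bernoulliUmbral_comp _ _ (Nat.lt_succ_of_le (Chebyshev.natDegree_C_comp_X_add_two_le m)),
    zagierBstarPoly, mul_sum]
  refine sum_congr rfl fun r _ => ?_
  rw [Chebyshev.coeff_C_comp_X_add_two_eq_div, bernoulliUmbral_X_add_C_pow]
  push_cast
  field_simp

theorem sum_alternating_choose_bernoulli_eq {n : ℕ} (hn : n ≠ 0) (x : ℝ) :
    ∑ r ∈ range (n + 1), (-1 : ℝ) ^ (n + r) * ((n + r).choose (2 * r) : ℝ) *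
        aeval x (Polynomial.bernoulli (2 * r)) / (n + r) =
      (2 * n : ℝ)⁻¹ * bernoulliUmbral ℝ ((Chebyshev.C ℝ (2 * n : ℕ)).comp (X + C x)) := by
  obtain ⟨n, rfl⟩ : ∃ k, n = k + 1 := ⟨n - 1, by omega⟩
  rw [Chebyshev.C_two_mul_eq_smul_comp, smul_comp, comp_assoc, map_smul, smul_eq_mul,
    Nat.cast_succ (R := ℤ),
    bernoulliUmbral_comp _ _ (Nat.lt_succ_of_le (Chebyshev.natDegree_C_comp_X_add_two_le n)),
    mul_sum, mul_sum]
  refine sum_congr rfl fun r _ => ?_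
  have hpow : (-X ^ 2 : ℝ[X]).comp (X + C x) ^ r = C ((-1) ^ r) * (X + C x) ^ (2 * r) := by
    rw [neg_comp, pow_comp, X_comp, neg_pow, ← pow_mul, map_pow, map_neg, map_one]
  rw [Chebyshev.coeff_C_comp_X_add_two_eq_div, hpow, bernoulliUmbral_C_mul,
    bernoulliUmbral_X_add_C_pow]
  push_cast
  field_simp
  ring

theorem zagier_alternating_sum_eq (n : ℕ) (hn : 0 < n) (x : ℝ) :
    ∑ r ∈ Finset.range (n + 1), (-1 : ℝ) ^ (n + r) * ((n + r).choose (2 * r) : ℝ) *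
        (Polynomial.aeval x (Polynomial.bernoulli (2 * r))) / (n + r)
      = 2 * zagierBstarPoly (2 * n) (x - 2) := by
  rw [sum_alternating_choose_bernoulli_eq hn.ne' x,
    zagierBstarPoly_eq_bernoulliUmbral (by omega) (x - 2), sub_add_cancel]
  push_cast
  ring
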